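/- In the NP-hardness construction from SET-PACKING, if a feasible edge selection has total weight w with kM ≤ w < (k+1)M (M = |U| + 1), then exactly k of the weight-M edges are selected, and the corresponding k subsets S_j are pairwise disjoint, yielding a set packing of size k. -/

import Mathlib

/-- An exchange club: a set of donors, a set of patients, a matching
multiplier `alpha` and a matching debt `gamma`. -/
structure Club (D P : Type) where
  donors : Finset D
  patients : Finset P
  alpha : ℚ
  gamma : ℚ

variable {D P : Type} [DecidableEq D] [DecidableEq P]

/-- Number of selected edges from donors of club `c` to patients outside `c`. -/
def ndExt (c : Club D P) (S : Finset (D × P)) : ℕ :=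
  (S.filter fun e => e.1 ∈ c.donors ∧ e.2 ∉ c.patients).card

/-- Number of selected edges from donors outside `c` to patients of club `c`. -/
def npExt (c : Club D P) (S : Finset (D × P)) : ℕ :=
  (S.filter fun e => e.1 ∉ c.donors ∧ e.2 ∈ c.patients).card

/-- The feasibility constraint of club `c` for a simultaneous selection `S`:
`n_d^ext ≤ α_c · n_p^ext + γ_c`. -/
def ClubOk (c : Club D P) (S : Finset (D × P)) : Prop :=
  (ndExt c S : ℚ) ≤ c.alpha * (npExt c S : ℚ) + c.gamma

/-- Each donor donates at most once and each patient receives at most once. -/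
def DonorPatientCaps (S : Finset (D × P)) : Prop :=
  (∀ d, (S.filter fun e => e.1 = d).card ≤ 1) ∧
  (∀ p, (S.filter fun e => e.2 = p).card ≤ 1)

/-! The explicit NP-hardness construction from SET-PACKING. -/

variable (U : Type) [Fintype U] [DecidableEq U]

/-- Donors: one item donor per item `u ∈ U` (for club `a_u`), and one gate
donor per subset `s` (for club `b_s`). -/
abbrev Don (U : Type) := U ⊕ Finset U

/-- Patients: one patient `(s, u)` inside gate club `b_s` for each `u ∈ s`,
and one patient per subset `s` (for club `c_s`). -/
abbrev Pat (U : Type) := (Finset U × U) ⊕ Finset U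

/-- Item club `a_u`: one donor, no patients, `γ = 1`. -/
def itemClub (u : U) : Club (Don U) (Pat U) := ⟨{Sum.inl u}, ∅, 1, 1⟩

/-- Gate club `b_s`: one donor, `|s|` patients, `α = 1/|s|`, `γ = 0`. -/
def gateClub (s : Finset U) : Club (Don U) (Pat U) :=
  ⟨{Sum.inr s}, s.image fun u => Sum.inl (s, u), 1 / (s.card : ℚ), 0⟩

/-- Sink club `c_s`: no donors, one patient. -/
def sinkClub (s : Finset U) : Club (Don U) (Pat U) := ⟨∅, {Sum.inr s}, 1, 0⟩

/-- Compatibility edges: a weight-`M` edge from the donor of `b_s` to the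
patient of `c_s` for each `s ∈ fam`, and a weight-1 edge from the donor of
`a_u` to patient `(s, u)` of `b_s` whenever `u ∈ s ∈ fam`. -/
def edges (fam : Finset (Finset U)) : Finset (Don U × Pat U) :=
  (fam.image fun s => (Sum.inr s, Sum.inr s)) ∪
    fam.biUnion fun s => s.image fun u => (Sum.inl u, Sum.inl (s, u))

/-- Edge weights: `M = |U| + 1` on the gate-to-sink edges, `1` elsewhere. -/
def wt : Don U × Pat U → ℚ
  | (Sum.inr _, Sum.inr _) => (Fintype.card U : ℚ) + 1
  | _ => 1

/-- Feasibility of all the clubs of the construction. -/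
def AllClubsOk (fam : Finset (Finset U)) (S : Finset (Don U × Pat U)) : Prop :=
  (∀ u : U, ClubOk (itemClub U u) S) ∧
  (∀ s ∈ fam, ClubOk (gateClub U s) S) ∧
  (∀ s ∈ fam, ClubOk (sinkClub U s) S)

/-! Every selected edge other than a gate edge `b_s → c_s` is an item edge `a_u → (s, u)` of
weight `1`, and these leave pairwise distinct donors `a_u`, so together they weigh at most
`|U| < M`; the total weight therefore counts the selected gate edges exactly. A gate club `b_s`
using its gate edge has `n_d^ext = 1` and `α = 1 / |s|`, so all `|s|` of its patients are
matched, necessarily by the item edges from the `a_u`, `u ∈ s`. Two selected gates sharing an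
item `u` would thus both use the single donor of `a_u`. -/

theorem DonorPatientCaps.injOn_fst {S : Finset (D × P)} (h : DonorPatientCaps S) :
    Set.InjOn Prod.fst (S : Set (D × P)) := fun e he e' he' hee' =>
  Finset.card_le_one.mp (h.1 e.1) e (Finset.mem_filter.mpr ⟨he, rfl⟩) e'
    (Finset.mem_filter.mpr ⟨he', hee'.symm⟩)

theorem Nat.eq_of_mul_le_mul_add_lt {R : Type*} [Semiring R] [LinearOrder R]
    [IsStrictOrderedRing R] {M r : R} {g k : ℕ} (hr : 0 ≤ r) (hrM : r < M)
    (hlo : k * M ≤ g * M + r) (hhi : g * M + r < (k + 1) * M) : g = k := by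
  have hM : 0 ≤ M := hr.trans hrM.le
  have hkg : (k : R) < g + 1 :=
    lt_of_mul_lt_mul_right (hlo.trans_lt (by rw [add_mul, one_mul]; gcongr)) hM
  have hgk : (g : R) < k + 1 :=
    lt_of_mul_lt_mul_right ((le_add_of_nonneg_right hr).trans_lt hhi) hM
  norm_cast at hkg hgk
  omega

section Construction

variable {V : Type}

def gateEdge (s : Finset V) : Don V × Pat V := (Sum.inr s, Sum.inr s)

def itemEdge (s : Finset V) (u : V) : Don V × Pat V := (Sum.inl u, Sum.inl (s, u))

theorem gateEdge_injective : Function.Injective (gateEdge (V := V)) := fun s t h => by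
  simpa [gateEdge] using h

theorem itemEdge_injective (s : Finset V) : Function.Injective (itemEdge s) := fun u v h => by
  simpa [itemEdge] using h

variable [DecidableEq V] {fam : Finset (Finset V)} {S : Finset (Don V × Pat V)}

theorem mem_edges {e : Don V × Pat V} :
    e ∈ edges V fam ↔ (∃ s ∈ fam, e = gateEdge s) ∨ ∃ s ∈ fam, ∃ u ∈ s, e = itemEdge s u := by
  simp [edges, gateEdge, itemEdge, eq_comm]

theorem npExt_gateClub_le (hS : S ⊆ edges V fam) (s : Finset V) :
    npExt (gateClub V s) S ≤ (S ∩ s.image (itemEdge s)).card := by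
  refine Finset.card_le_card fun e he => ?_
  simp only [gateClub, Finset.mem_filter, Finset.mem_image] at he
  obtain ⟨heS, -, u, hu, hpat⟩ := he
  rcases mem_edges.mp (hS heS) with ⟨t, -, rfl⟩ | ⟨t, -, v, -, rfl⟩
  · simp [gateEdge] at hpat
  · obtain ⟨rfl, rfl⟩ : s = t ∧ u = v := by simpa [itemEdge] using hpat
    exact Finset.mem_inter.mpr ⟨heS, Finset.mem_image_of_mem _ hu⟩

theorem card_le_npExt_gateClub {s : Finset V} (hs : s.Nonempty)
    (hok : ClubOk (gateClub V s) S) (hg : gateEdge s ∈ S) :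
    s.card ≤ npExt (gateClub V s) S := by
  have hnd : 1 ≤ ndExt (gateClub V s) S :=
    Finset.card_pos.mpr ⟨gateEdge s, Finset.mem_filter.mpr ⟨hg, by simp [gateClub, gateEdge]⟩⟩
  have hcard : (0 : ℚ) < s.card := by exact_mod_cast hs.card_pos
  have hok' : (ndExt (gateClub V s) S : ℚ) ≤ npExt (gateClub V s) S / s.card := by
    simpa [ClubOk, gateClub, div_eq_inv_mul] using hok
  rw [le_div_iff₀ hcard] at hok'
  exact_mod_cast (le_mul_of_one_le_left hcard.le (by exact_mod_cast hnd)).trans hok'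

theorem image_itemEdge_subset (hS : S ⊆ edges V fam) {s : Finset V} (hs : s.Nonempty)
    (hok : ClubOk (gateClub V s) S) (hg : gateEdge s ∈ S) : s.image (itemEdge s) ⊆ S := by
  have hcard : (s.image (itemEdge s)).card ≤ (S ∩ s.image (itemEdge s)).card := by
    rw [Finset.card_image_of_injective _ (itemEdge_injective s)]
    exact (card_le_npExt_gateClub hs hok hg).trans (npExt_gateClub_le hS s)
  exact Finset.inter_eq_right.mp (Finset.eq_of_subset_of_card_le Finset.inter_subset_right hcard)

theorem exists_eq_itemEdge_of_not_gate (hS : S ⊆ edges V fam) {e : Don V × Pat V} (he : e ∈ S)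
    (hng : ¬∃ s, e = gateEdge s) : ∃ s u, e = itemEdge s u := by
  rcases mem_edges.mp (hS he) with ⟨s, -, rfl⟩ | ⟨s, -, u, -, rfl⟩
  · exact absurd ⟨s, rfl⟩ hng
  · exact ⟨s, u, rfl⟩

theorem sum_wt_eq [Fintype V] (hS : S ⊆ edges V fam) :
    ∑ e ∈ S, wt V e = (S.filter fun e => ∃ s, e = gateEdge s).card * (Fintype.card V + 1 : ℚ)
      + (S.filter fun e => ¬∃ s, e = gateEdge s).card := by
  rw [← Finset.sum_filter_add_sum_filter_not S fun e => ∃ s, e = gateEdge s]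
  congr 1
  · rw [Finset.sum_congr rfl fun e he => ?_, Finset.sum_const, nsmul_eq_mul]
    obtain ⟨s, rfl⟩ := (Finset.mem_filter.mp he).2
    rfl
  · rw [Finset.sum_congr rfl fun e he => ?_, Finset.sum_const, nsmul_eq_mul, mul_one]
    obtain ⟨heS, hng⟩ := Finset.mem_filter.mp he
    obtain ⟨s, u, rfl⟩ := exists_eq_itemEdge_of_not_gate hS heS hng
    rfl

theorem card_filter_not_gate_le [Fintype V] (hS : S ⊆ edges V fam)
    (hcaps : DonorPatientCaps S) :
    (S.filter fun e => ¬∃ s, e = gateEdge s).card ≤ Fintype.card V := by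
  calc _ ≤ (Finset.univ.map (Function.Embedding.inl : V ↪ Don V)).card := by
        refine Finset.card_le_card_of_injOn Prod.fst (fun e he => ?_)
          (hcaps.injOn_fst.mono (Finset.coe_subset.mpr (Finset.filter_subset _ S)))
        obtain ⟨heS, hng⟩ := Finset.mem_filter.mp he
        obtain ⟨s, u, rfl⟩ := exists_eq_itemEdge_of_not_gate hS heS hng
        simp [itemEdge]
    _ = Fintype.card V := by simp

theorem filter_gate_eq_image [Fintype V] (hS : S ⊆ edges V fam) :
    S.filter (fun e => ∃ s, e = gateEdge s) =
      (fam.filter fun s => gateEdge s ∈ S).image gateEdge := by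
  ext e
  simp only [Finset.mem_filter, Finset.mem_image]
  constructor
  · rintro ⟨heS, s, rfl⟩
    refine ⟨s, ⟨?_, heS⟩, rfl⟩
    rcases mem_edges.mp (hS heS) with ⟨t, ht, h⟩ | ⟨t, -, u, -, h⟩
    · rwa [gateEdge_injective h]
    · simp [gateEdge, itemEdge] at h
  · rintro ⟨s, ⟨-, hs⟩, rfl⟩
    exact ⟨hs, s, rfl⟩

theorem disjoint_of_gateEdge_mem (hS : S ⊆ edges V fam) (hcaps : DonorPatientCaps S)
    {a b : Finset V} (ha : a.Nonempty) (hb : b.Nonempty) (hoka : ClubOk (gateClub V a) S)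
    (hokb : ClubOk (gateClub V b) S) (hga : gateEdge a ∈ S) (hgb : gateEdge b ∈ S)
    (hab : a ≠ b) : Disjoint a b := by
  refine Finset.disjoint_left.mpr fun u hua hub => hab ?_
  have hsame : itemEdge a u = itemEdge b u :=
    hcaps.injOn_fst (image_itemEdge_subset hS ha hoka hga (Finset.mem_image_of_mem _ hua))
      (image_itemEdge_subset hS hb hokb hgb (Finset.mem_image_of_mem _ hub)) rfl
  simpa [itemEdge] using hsame

end Construction

/-- if the constructed instance has a feasible edge selection `S`
of total weight `w` with `kM ≤ w < (k+1)M` (`M = |U| + 1`), then exactly `k`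
of the weight-`M` gate-to-sink edges are selected and the corresponding `k`
subsets are pairwise disjoint, yielding a set packing of size `k`. -/
theorem stmt_6 (fam : Finset (Finset U)) (hne : ∀ s ∈ fam, s.Nonempty) (k : ℕ)
    (S : Finset (Don U × Pat U)) (hS : S ⊆ edges U fam)
    (hcaps : DonorPatientCaps S) (hok : AllClubsOk U fam S)
    (hlo : (k : ℚ) * ((Fintype.card U : ℚ) + 1) ≤ ∑ e ∈ S, wt U e)
    (hhi : ∑ e ∈ S, wt U e < ((k : ℚ) + 1) * ((Fintype.card U : ℚ) + 1)) :
    (S.filter fun e => ∃ s : Finset U, e = (Sum.inr s, Sum.inr s)).card = k ∧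
    ∃ X ⊆ fam, X.card = k ∧
      ((X : Set (Finset U)).Pairwise fun a b => Disjoint a b) ∧
      (∀ s ∈ fam, (s ∈ X ↔ (Sum.inr s, Sum.inr s) ∈ S)) := by
  have hitems : ((S.filter fun e => ¬∃ s, e = gateEdge s).card : ℚ) < Fintype.card U + 1 := by
    exact_mod_cast Nat.lt_succ_of_le (card_filter_not_gate_le hS hcaps)
  rw [sum_wt_eq hS] at hlo hhi
  have hk : (S.filter fun e => ∃ s, e = gateEdge s).card = k :=
    Nat.eq_of_mul_le_mul_add_lt (Nat.cast_nonneg _) hitems hlo hhi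
  set X := fam.filter fun s => gateEdge s ∈ S
  refine ⟨hk, X, Finset.filter_subset _ _, ?_, ?_, fun s hs => Finset.mem_filter.trans (and_iff_right hs)⟩
  · rw [← hk, filter_gate_eq_image hS, Finset.card_image_of_injective _ gateEdge_injective]
  · intro a ha b hb hab
    obtain ⟨haf, hga⟩ := Finset.mem_filter.mp ha
    obtain ⟨hbf, hgb⟩ := Finset.mem_filter.mp hb
    exact disjoint_of_gateEdge_mem hS hcaps (hne a haf) (hne b hbf) (hok.2.1 a haf)
      (hok.2.1 b hbf) hga hgb hab
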